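/- Let φ be a propositional CNF formula over a finite set V of variables. For each v ∈ V take fresh atoms in(v), out(v), and a fresh atom f. Let P consist of: clauses in(v) ← not(out(v)) and out(v) ← not(in(v)) for each v ∈ V, and for each clause c = ¬a1 ∨ ... ∨ ¬ak ∨ b1 ∨ ... ∨ bm of φ, the clause f ← in(a1),...,in(ak), not(in(b1)),...,not(in(bm)), not(f). Then M is a stable model of P if and only if M = {in(v) : v ∈ S} ∪ {out(v) : v ∈ V \ S} for some S ⊆ V such that the valuation assigning true to exactly the variables in S satisfies φ. -/
import Mathlib


structure Clause (α : Type) where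
  head : α
  pos : Finset α
  neg : Finset α
deriving DecidableEq

/-- The Gelfond–Lifschitz reduct of program `P` with respect to `M`. -/
def reduct {α : Type} (P : Finset (Clause α)) (M : Set α) : Set (Clause α) :=
  {C | ∃ D ∈ P, (∀ r ∈ D.neg, r ∉ M) ∧ C = ⟨D.head, D.pos, ∅⟩}

/-- `X` is closed under the rules of the definite program `Q`. -/
def DefClosed {α : Type} (Q : Set (Clause α)) (X : Set α) : Prop :=
  ∀ C ∈ Q, (∀ q ∈ C.pos, q ∈ X) → C.head ∈ X

/-- Least model of a definite program: least set of atoms closed under its rules. -/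
def LM {α : Type} (Q : Set (Clause α)) : Set α :=
  ⋂₀ {X | DefClosed Q X}

/-- `M` is a stable model of `P`. -/
def IsStable {α : Type} (P : Finset (Clause α)) (M : Set α) : Prop :=
  M = LM (reduct P M)


/-- Atoms for the SAT encoding: `in(v)`, `out(v)` and the fresh atom `f`. -/
inductive SAtom (α : Type) where
  | inn : α → SAtom α
  | out : α → SAtom α
  | f : SAtom α
deriving DecidableEq

lemma lm_closed {α : Type} (Q : Set (Clause α)) : DefClosed Q (LM Q) := by
  intro C hC hpos
  rw [LM, Set.mem_sInter]
  intro X hX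
  exact hX C hC (fun q hq => Set.mem_sInter.1 (hpos q hq) X hX)

lemma lm_le {α : Type} {Q : Set (Clause α)} {X : Set α} (h : DefClosed Q X) :
    LM Q ⊆ X := fun _ ha => Set.mem_sInter.1 ha X h

lemma mem_reduct_sat {α : Type} [DecidableEq α]
    (V : Finset α) (Cls : Finset (Finset α × Finset α)) (M : Set (SAtom α))
    (C : Clause (SAtom α)) :
    C ∈ reduct
        (V.image (fun v => (⟨SAtom.inn v, ∅, {SAtom.out v}⟩ : Clause (SAtom α))) ∪
          V.image (fun v => (⟨SAtom.out v, ∅, {SAtom.inn v}⟩ : Clause (SAtom α))) ∪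
          Cls.image (fun c =>
            (⟨SAtom.f, c.1.image SAtom.inn,
              insert SAtom.f (c.2.image SAtom.inn)⟩ : Clause (SAtom α)))) M ↔
      (∃ v ∈ V, SAtom.out v ∉ M ∧ C = ⟨SAtom.inn v, ∅, ∅⟩) ∨
      (∃ v ∈ V, SAtom.inn v ∉ M ∧ C = ⟨SAtom.out v, ∅, ∅⟩) ∨
      (∃ c ∈ Cls, SAtom.f ∉ M ∧ (∀ b ∈ c.2, SAtom.inn b ∉ M) ∧
        C = ⟨SAtom.f, c.1.image SAtom.inn, ∅⟩) := by
  constructor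
  · rintro ⟨D, hD, hneg, rfl⟩
    rcases Finset.mem_union.1 hD with hD' | hD'
    · rcases Finset.mem_union.1 hD' with hD'' | hD''
      · obtain ⟨v, hv, rfl⟩ := Finset.mem_image.1 hD''
        exact Or.inl ⟨v, hv, hneg _ (Finset.mem_singleton_self _), rfl⟩
      · obtain ⟨v, hv, rfl⟩ := Finset.mem_image.1 hD''
        exact Or.inr (Or.inl ⟨v, hv, hneg _ (Finset.mem_singleton_self _), rfl⟩)
    · obtain ⟨c, hc, rfl⟩ := Finset.mem_image.1 hD'
      refine Or.inr (Or.inr ⟨c, hc, hneg _ (Finset.mem_insert_self _ _), ?_, rfl⟩)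
      intro b hb
      exact hneg _ (Finset.mem_insert_of_mem (Finset.mem_image_of_mem _ hb))
  · rintro (⟨v, hv, hout, rfl⟩ | ⟨v, hv, hin, rfl⟩ | ⟨c, hc, hf, hb, rfl⟩)
    · refine ⟨⟨SAtom.inn v, ∅, {SAtom.out v}⟩, ?_, ?_, rfl⟩
      · exact Finset.mem_union.2 (Or.inl (Finset.mem_union.2 (Or.inl
          (Finset.mem_image_of_mem _ hv))))
      · intro r hr; rw [Finset.mem_singleton] at hr; subst hr; exact hout
    · refine ⟨⟨SAtom.out v, ∅, {SAtom.inn v}⟩, ?_, ?_, rfl⟩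
      · exact Finset.mem_union.2 (Or.inl (Finset.mem_union.2 (Or.inr
          (Finset.mem_image_of_mem _ hv))))
      · intro r hr; rw [Finset.mem_singleton] at hr; subst hr; exact hin
    · refine ⟨⟨SAtom.f, c.1.image SAtom.inn,
        insert SAtom.f (c.2.image SAtom.inn)⟩, ?_, ?_, rfl⟩
      · exact Finset.mem_union.2 (Or.inr (Finset.mem_image_of_mem _ hc))
      · intro r hr
        rcases Finset.mem_insert.1 hr with rfl | hr'
        · exact hf
        · obtain ⟨b, hb', rfl⟩ := Finset.mem_image.1 hr'
          exact hb b hb'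

/-- SAT encoding correctness.  A CNF clause is a pair `c = (c.1, c.2)` where
`c.1` is the set of negatively occurring variables and `c.2` the set of
positively occurring variables.  The stable models of the program correspond
exactly to the satisfying valuations `S ⊆ V` of the formula. -/
theorem sat_encoding {α : Type} [DecidableEq α]
    (V : Finset α) (Cls : Finset (Finset α × Finset α))
    (hvars : ∀ c ∈ Cls, c.1 ⊆ V ∧ c.2 ⊆ V) (M : Set (SAtom α)) :
    IsStable
        (V.image (fun v => (⟨SAtom.inn v, ∅, {SAtom.out v}⟩ : Clause (SAtom α))) ∪
          V.image (fun v => (⟨SAtom.out v, ∅, {SAtom.inn v}⟩ : Clause (SAtom α))) ∪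
          Cls.image (fun c =>
            (⟨SAtom.f, c.1.image SAtom.inn,
              insert SAtom.f (c.2.image SAtom.inn)⟩ : Clause (SAtom α)))) M ↔
      ∃ S : Finset α, S ⊆ V ∧
        M = SAtom.inn '' (↑S : Set α) ∪ SAtom.out '' ((↑V : Set α) \ ↑S) ∧
        ∀ c ∈ Cls, (∃ a ∈ c.1, a ∉ S) ∨ ∃ b ∈ c.2, b ∈ S := by
  classical
  constructor
  · intro hM
    have hStable : M = LM (reduct _ M) := hM
    have hclosed : DefClosed (reduct
        (V.image (fun v => (⟨SAtom.inn v, ∅, {SAtom.out v}⟩ : Clause (SAtom α))) ∪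
          V.image (fun v => (⟨SAtom.out v, ∅, {SAtom.inn v}⟩ : Clause (SAtom α))) ∪
          Cls.image (fun c =>
            (⟨SAtom.f, c.1.image SAtom.inn,
              insert SAtom.f (c.2.image SAtom.inn)⟩ : Clause (SAtom α)))) M) M := by
      have h := lm_closed (reduct
        (V.image (fun v => (⟨SAtom.inn v, ∅, {SAtom.out v}⟩ : Clause (SAtom α))) ∪
          V.image (fun v => (⟨SAtom.out v, ∅, {SAtom.inn v}⟩ : Clause (SAtom α))) ∪
          Cls.image (fun c =>
            (⟨SAtom.f, c.1.image SAtom.inn,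
              insert SAtom.f (c.2.image SAtom.inn)⟩ : Clause (SAtom α)))) M)
      rwa [← hStable] at h
    have hfact_in : ∀ v ∈ V, SAtom.out v ∉ M → SAtom.inn v ∈ M := by
      intro v hv hout
      exact hclosed _ ((mem_reduct_sat V Cls M _).2 (Or.inl ⟨v, hv, hout, rfl⟩))
        (by simp)
    have hfact_out : ∀ v ∈ V, SAtom.inn v ∉ M → SAtom.out v ∈ M := by
      intro v hv hin
      exact hclosed _ ((mem_reduct_sat V Cls M _).2 (Or.inr (Or.inl ⟨v, hv, hin, rfl⟩)))
        (by simp)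
    have hf : SAtom.f ∉ M := by
      intro hfM
      have hX : DefClosed (reduct
          (V.image (fun v => (⟨SAtom.inn v, ∅, {SAtom.out v}⟩ : Clause (SAtom α))) ∪
            V.image (fun v => (⟨SAtom.out v, ∅, {SAtom.inn v}⟩ : Clause (SAtom α))) ∪
            Cls.image (fun c =>
              (⟨SAtom.f, c.1.image SAtom.inn,
                insert SAtom.f (c.2.image SAtom.inn)⟩ : Clause (SAtom α)))) M)
          {x | x ≠ SAtom.f} := by
        intro C hC _
        rcases (mem_reduct_sat V Cls M C).1 hC with
          ⟨v, _, _, rfl⟩ | ⟨v, _, _, rfl⟩ | ⟨c, _, hf', _, rfl⟩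
        · simp
        · simp
        · exact absurd hfM hf'
      have hsub := lm_le hX
      rw [← hStable] at hsub
      exact hsub hfM rfl
    set S : Finset α := V.filter (fun v => SAtom.inn v ∈ M) with hSdef
    have hmemS : ∀ v, v ∈ S ↔ v ∈ V ∧ SAtom.inn v ∈ M := by
      intro v; rw [hSdef, Finset.mem_filter]
    refine ⟨S, Finset.filter_subset _ _, ?_, ?_⟩
    · have hY : DefClosed (reduct
          (V.image (fun v => (⟨SAtom.inn v, ∅, {SAtom.out v}⟩ : Clause (SAtom α))) ∪
            V.image (fun v => (⟨SAtom.out v, ∅, {SAtom.inn v}⟩ : Clause (SAtom α))) ∪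
            Cls.image (fun c =>
              (⟨SAtom.f, c.1.image SAtom.inn,
                insert SAtom.f (c.2.image SAtom.inn)⟩ : Clause (SAtom α)))) M)
          (SAtom.inn '' (↑S : Set α) ∪ SAtom.out '' ((↑V : Set α) \ ↑S)) := by
        intro C hC hpos
        rcases (mem_reduct_sat V Cls M C).1 hC with
          ⟨v, hv, hout, rfl⟩ | ⟨v, hv, hin, rfl⟩ | ⟨c, hc, hfn, hbn, rfl⟩
        · exact Or.inl ⟨v, Finset.mem_coe.2 ((hmemS v).2 ⟨hv, hfact_in v hv hout⟩), rfl⟩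
        · refine Or.inr ⟨v, ⟨Finset.mem_coe.2 hv, fun hvS => ?_⟩, rfl⟩
          exact hin ((hmemS v).1 (Finset.mem_coe.1 hvS)).2
        · exfalso
          apply hfn
          apply hclosed _ hC
          intro q hq
          obtain ⟨a, ha, rfl⟩ := Finset.mem_image.1 hq
          rcases hpos _ hq with ⟨w, hw, heq⟩ | ⟨w, hw, heq⟩
          · injection heq with h; subst h
            exact ((hmemS w).1 (Finset.mem_coe.1 hw)).2
          · simp at heq
      have hMY := lm_le hY
      rw [← hStable] at hMY
      refine Set.Subset.antisymm hMY ?_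
      rintro x (⟨v, hv, rfl⟩ | ⟨v, ⟨hvV, hvS⟩, rfl⟩)
      · exact ((hmemS v).1 (Finset.mem_coe.1 hv)).2
      · refine hfact_out v (Finset.mem_coe.1 hvV) (fun hin => ?_)
        exact hvS (Finset.mem_coe.2 ((hmemS v).2 ⟨Finset.mem_coe.1 hvV, hin⟩))
    · intro c hc
      by_contra h
      push_neg at h
      obtain ⟨h1, h2⟩ := h
      apply hf
      apply hclosed _ ((mem_reduct_sat V Cls M _).2 (Or.inr (Or.inr
        ⟨c, hc, hf, ?_, rfl⟩)))
      · intro q hq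
        obtain ⟨a, ha, rfl⟩ := Finset.mem_image.1 hq
        exact ((hmemS a).1 (h1 a ha)).2
      · intro b hb hbM
        exact h2 b hb ((hmemS b).2 ⟨(hvars c hc).2 hb, hbM⟩)
  · rintro ⟨S, hSV, rfl, hsat⟩
    set N : Set (SAtom α) := SAtom.inn '' (↑S : Set α) ∪ SAtom.out '' ((↑V : Set α) \ ↑S)
      with hNdef
    have hin : ∀ v, SAtom.inn v ∈ N ↔ v ∈ S := by
      intro v
      constructor
      · rintro (⟨w, hw, heq⟩ | ⟨w, hw, heq⟩)
        · injection heq with h; subst h; exact Finset.mem_coe.1 hw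
        · simp at heq
      · intro hv; exact Or.inl ⟨v, Finset.mem_coe.2 hv, rfl⟩
    have hout : ∀ v, SAtom.out v ∈ N ↔ v ∈ V ∧ v ∉ S := by
      intro v
      constructor
      · rintro (⟨w, hw, heq⟩ | ⟨w, ⟨hwV, hwS⟩, heq⟩)
        · simp at heq
        · injection heq with h; subst h
          exact ⟨Finset.mem_coe.1 hwV, fun hv => hwS (Finset.mem_coe.2 hv)⟩
      · rintro ⟨hvV, hvS⟩
        exact Or.inr ⟨v, ⟨Finset.mem_coe.2 hvV, fun h => hvS (Finset.mem_coe.1 h)⟩, rfl⟩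
    have hfN : SAtom.f ∉ N := by
      rintro (⟨w, _, heq⟩ | ⟨w, _, heq⟩) <;> simp at heq
    have hNclosed : DefClosed (reduct
        (V.image (fun v => (⟨SAtom.inn v, ∅, {SAtom.out v}⟩ : Clause (SAtom α))) ∪
          V.image (fun v => (⟨SAtom.out v, ∅, {SAtom.inn v}⟩ : Clause (SAtom α))) ∪
          Cls.image (fun c =>
            (⟨SAtom.f, c.1.image SAtom.inn,
              insert SAtom.f (c.2.image SAtom.inn)⟩ : Clause (SAtom α)))) N) N := by
      intro C hC hpos
      rcases (mem_reduct_sat V Cls N C).1 hC with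
        ⟨v, hv, houtN, rfl⟩ | ⟨v, hv, hinN, rfl⟩ | ⟨c, hc, hfn, hbn, rfl⟩
      · refine (hin v).2 ?_
        by_contra hvS
        exact houtN ((hout v).2 ⟨hv, hvS⟩)
      · refine (hout v).2 ⟨hv, fun hvS => hinN ((hin v).2 hvS)⟩
      · exfalso
        rcases hsat c hc with ⟨a, ha, haS⟩ | ⟨b, hb, hbS⟩
        · exact haS ((hin a).1 (hpos _ (Finset.mem_image_of_mem _ ha)))
        · exact hbn b hb ((hin b).2 hbS)
    show N = LM (reduct _ N)
    refine Set.Subset.antisymm ?_ (lm_le hNclosed)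
    rintro x (⟨v, hv, rfl⟩ | ⟨v, ⟨hvV, hvS⟩, rfl⟩)
    · have hvS : v ∈ S := Finset.mem_coe.1 hv
      have houtN : SAtom.out v ∉ N := fun h => ((hout v).1 h).2 hvS
      exact lm_closed _ _ ((mem_reduct_sat V Cls N _).2
        (Or.inl ⟨v, hSV hvS, houtN, rfl⟩)) (by simp)
    · have hvS' : v ∉ S := fun h => hvS (Finset.mem_coe.2 h)
      have hinN : SAtom.inn v ∉ N := fun h => hvS' ((hin v).1 h)
      exact lm_closed _ _ ((mem_reduct_sat V Cls N _).2
        (Or.inr (Or.inl ⟨v, Finset.mem_coe.1 hvV, hinN, rfl⟩))) (by simp)
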